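/- Let J = Σ_m π m · s m · t m − β · D(π‖q), L_succ = Σ_m π₁ m · t m − β · D(π₁‖q), and L_fail = −β · D(π₀‖q). Then J = P₁ · L_succ + P₀ · L_fail + β · I(X;R). (This is the information-theoretic decomposition of the TAMTRL objective: the objective equals the success-probability-weighted success-conditional term, plus the failure-probability-weighted failure-conditional regularization term, plus β times the memory–reward mutual information.) -/

import Mathlib

open Finset Real

/-! Reweighting `p` by `w / c` shifts its log-likelihood ratio against `q` by `log (w / c)`. Applying
this to the success weights `s / P₁` and the failure weights `(1 - s) / P₀`, which add up to `p`, splits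
`D(π‖q)` into `P₁ D(π₁‖q) + P₀ D(π₀‖q)` minus the mutual information; the reward term of `J`
is `P₁` times the success-conditional reward. -/

section Reweighting

variable {M : Type*} [Fintype M]

theorem mul_mul_log_reweight {x w c y : ℝ} (hc : c ≠ 0) (hy : y ≠ 0) :
    c * (x * w / c * log (x * w / c / y)) = x * w * log (x / y) + x * w * log (w / c) := by
  rcases eq_or_ne x 0 with rfl | hx
  · simp
  rcases eq_or_ne w 0 with rfl | hw
  · simp
  have hsplit : x * w / c / y = x / y * (w / c) := by ring
  rw [hsplit, log_mul (by positivity) (by positivity)]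
  field_simp

theorem mul_sum_reweight_mul (p w f p' : M → ℝ) {c : ℝ} (hc : c ≠ 0)
    (hp' : ∀ m, p' m = p m * w m / c) :
    c * ∑ m, p' m * f m = ∑ m, p m * w m * f m := by
  rw [mul_sum]
  refine sum_congr rfl fun m _ => ?_
  rw [hp']
  field_simp

theorem mul_sum_reweight_mul_log (p w q p' : M → ℝ) {c : ℝ} (hc : c ≠ 0) (hq : ∀ m, q m ≠ 0)
    (hp' : ∀ m, p' m = p m * w m / c) :
    c * ∑ m, p' m * log (p' m / q m)
      = ∑ m, p m * w m * log (p m / q m) + ∑ m, p m * w m * log (w m / c) := by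
  rw [mul_sum, ← sum_add_distrib]
  refine sum_congr rfl fun m _ => ?_
  rw [hp']
  exact mul_mul_log_reweight hc (hq m)

/-- Chain rule for relative entropy along the split `p = p w + p (1 - w)`; `c₁` and `c₀` need not
be the normalizing constants of the two parts. -/
theorem mul_sum_mul_log_add_mul_sum_mul_log_of_split (p w q p₁ p₀ : M → ℝ) {c₁ c₀ : ℝ}
    (hc₁ : c₁ ≠ 0) (hc₀ : c₀ ≠ 0) (hq : ∀ m, q m ≠ 0)
    (hp₁ : ∀ m, p₁ m = p m * w m / c₁) (hp₀ : ∀ m, p₀ m = p m * (1 - w m) / c₀) :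
    c₁ * ∑ m, p₁ m * log (p₁ m / q m) + c₀ * ∑ m, p₀ m * log (p₀ m / q m)
      = ∑ m, p m * log (p m / q m)
        + ∑ m, (p m * w m * log (w m / c₁) + p m * (1 - w m) * log ((1 - w m) / c₀)) := by
  rw [mul_sum_reweight_mul_log p w q p₁ hc₁ hq hp₁,
    mul_sum_reweight_mul_log p (fun m => 1 - w m) q p₀ hc₀ hq hp₀, sum_add_distrib]
  have hrecombine : ∑ m, p m * w m * log (p m / q m) + ∑ m, p m * (1 - w m) * log (p m / q m)
      = ∑ m, p m * log (p m / q m) := by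
    rw [← sum_add_distrib]
    exact sum_congr rfl fun m _ => by ring
  linear_combination hrecombine

end Reweighting

theorem tamtrl_objective_decomposition_general
    {M : Type*} [Fintype M] [Nonempty M]
    (p q s t : M → ℝ) (β : ℝ)
    (hp_pos : ∀ m, 0 < p m) (hp_sum : ∑ m, p m = 1)
    (hq_pos : ∀ m, 0 < q m)
    (hs : ∀ m, 0 < s m ∧ s m < 1)
    (P₁ P₀ : ℝ)
    (hP₁ : P₁ = ∑ m, p m * s m)
    (hP₀ : P₀ = 1 - P₁)
    (p₁ p₀ : M → ℝ)
    (hp₁ : ∀ m, p₁ m = p m * s m / P₁)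
    (hp₀ : ∀ m, p₀ m = p m * (1 - s m) / P₀)
    (I : ℝ)
    (hI : I = ∑ m, (p m * s m * Real.log (s m / P₁)
        + p m * (1 - s m) * Real.log ((1 - s m) / P₀)))
    (J Lsucc Lfail : ℝ)
    (hJ : J = (∑ m, p m * s m * t m) - β * ∑ m, p m * Real.log (p m / q m))
    (hLsucc : Lsucc = (∑ m, p₁ m * t m) - β * ∑ m, p₁ m * Real.log (p₁ m / q m))
    (hLfail : Lfail = -β * ∑ m, p₀ m * Real.log (p₀ m / q m)) :
    J = P₁ * Lsucc + P₀ * Lfail + β * I := by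
  have hP₁_pos : 0 < P₁ := hP₁ ▸ sum_pos (fun m _ => mul_pos (hp_pos m) (hs m).1) univ_nonempty
  have hP₀_pos : 0 < P₀ := by
    have hP₀_eq : P₀ = ∑ m, p m * (1 - s m) := by
      simp only [hP₀, hP₁, mul_one_sub, sum_sub_distrib, hp_sum]
    exact hP₀_eq ▸ sum_pos (fun m _ => mul_pos (hp_pos m) (sub_pos.2 (hs m).2)) univ_nonempty
  have hreward := mul_sum_reweight_mul p s t p₁ hP₁_pos.ne' hp₁
  have hchain := mul_sum_mul_log_add_mul_sum_mul_log_of_split p s q p₁ p₀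
    hP₁_pos.ne' hP₀_pos.ne' (fun m => (hq_pos m).ne') hp₁ hp₀
  rw [hJ, hLsucc, hLfail, hI]
  linear_combination β * hchain - hreward

/-- Information-theoretic decomposition of the TAMTRL objective:
`J = P₁ * L_succ + P₀ * L_fail + β * I(X;R)`, where
`J = Σ_m π m * s m * t m − β * D(π‖q)`,
`L_succ = Σ_m π₁ m * t m − β * D(π₁‖q)`, and
`L_fail = −β * D(π₀‖q)`. -/
theorem tamtrl_objective_decomposition
    {M : Type*} [Fintype M] [Nonempty M]
    (p q s t : M → ℝ) (β : ℝ)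
    (hp_pos : ∀ m, 0 < p m) (hp_sum : ∑ m, p m = 1)
    (hq_pos : ∀ m, 0 < q m) (hq_sum : ∑ m, q m = 1)
    (hs : ∀ m, 0 < s m ∧ s m < 1)
    (P₁ P₀ : ℝ)
    (hP₁ : P₁ = ∑ m, p m * s m)
    (hP₀ : P₀ = 1 - P₁)
    (p₁ p₀ : M → ℝ)
    (hp₁ : ∀ m, p₁ m = p m * s m / P₁)
    (hp₀ : ∀ m, p₀ m = p m * (1 - s m) / P₀)
    (I : ℝ)
    (hI : I = ∑ m, (p m * s m * Real.log (s m / P₁)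
        + p m * (1 - s m) * Real.log ((1 - s m) / P₀)))
    (J Lsucc Lfail : ℝ)
    (hJ : J = (∑ m, p m * s m * t m) - β * ∑ m, p m * Real.log (p m / q m))
    (hLsucc : Lsucc = (∑ m, p₁ m * t m) - β * ∑ m, p₁ m * Real.log (p₁ m / q m))
    (hLfail : Lfail = -β * ∑ m, p₀ m * Real.log (p₀ m / q m)) :
    J = P₁ * Lsucc + P₀ * Lfail + β * I :=
  tamtrl_objective_decomposition_general p q s t β hp_pos hp_sum hq_pos hs P₁ P₀ hP₁ hP₀ p₁ p₀ hp₁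
    hp₀ I hI J Lsucc Lfail hJ hLsucc hLfail
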